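/- Fix an integer g ≥ 1. For Q, W ∈ ℝ^{g+1} with cyclic indices modulo g+1, define C_{g−1}(Q,W) = min over: Q_i + Q_j (1 ≤ i < j ≤ g+1), W_i + W_j (1 ≤ i < j ≤ g+1), and Q_i + W_j for pairs with j ≢ i and j ≢ i−1 modulo g+1. Let S = {(Q,W) : min(min_i Q_i, min_i W_i) = 0 and C_{g−1}(Q,W) > 0}, and for i = 0, 1, …, g let T^i = {(Q,W) ∈ S : W_{i+1} > 0 and (Q_{i+1} = 0 or W_i = 0)}, where indices are modulo g+1 (so W_0 means W_{g+1}). Then: (i) T^i ∩ T^j = ∅ whenever 0 ≤ i < j ≤ g; and (ii) S = T^0 ∪ T^1 ∪ ⋯ ∪ T^g. -/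
import Mathlib


/-- The conserved quantity `C_{g−1}` of the ultra-discrete `(g+1)`-periodic Toda
lattice: the minimum of `Q_i + Q_j` (`i < j`), `W_i + W_j` (`i < j`), and
`Q_i + W_j` (`j ≢ i, i−1 mod g+1`).  Indices are 0-based. -/
noncomputable def Cgm1 (g : ℕ) (Q W : Fin (g + 1) → ℝ) : ℝ :=
  sInf ({x | ∃ i j : Fin (g + 1), i < j ∧ x = Q i + Q j} ∪
        {x | ∃ i j : Fin (g + 1), i < j ∧ x = W i + W j} ∪
        {x | ∃ i j : Fin (g + 1), j ≠ i ∧ j ≠ i - 1 ∧ x = Q i + W j})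

/-- The set `S` of states with `min(min_i Q_i, min_i W_i) = 0` and `C_{g−1} > 0`. -/
noncomputable def Sset (g : ℕ) : Set ((Fin (g + 1) → ℝ) × (Fin (g + 1) → ℝ)) :=
  {QW | min (Finset.univ.inf' Finset.univ_nonempty QW.1)
            (Finset.univ.inf' Finset.univ_nonempty QW.2) = 0 ∧
        0 < Cgm1 g QW.1 QW.2}

/-- The subset `T^i ⊂ S` defined by `W_{i+1} > 0` and (`Q_{i+1} = 0` or `W_i = 0`)
(1-based subscripts mod `g+1`, so in 0-based coordinates: `W i > 0` and
(`Q i = 0` or `W (i−1) = 0`)). -/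
noncomputable def Tset (g : ℕ) (i : Fin (g + 1)) :
    Set ((Fin (g + 1) → ℝ) × (Fin (g + 1) → ℝ)) :=
  {QW ∈ Sset g | 0 < QW.2 i ∧ (QW.1 i = 0 ∨ QW.2 (i - 1) = 0)}

section Aux

variable {g : ℕ}

lemma aux_pos_of_mem {Q W : Fin (g + 1) → ℝ} (hQ : ∀ i, 0 ≤ Q i) (hW : ∀ i, 0 ≤ W i)
    (hC : 0 < Cgm1 g Q W) {x : ℝ}
    (hx : x ∈ ({x | ∃ i j : Fin (g + 1), i < j ∧ x = Q i + Q j} ∪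
        {x | ∃ i j : Fin (g + 1), i < j ∧ x = W i + W j} ∪
        {x | ∃ i j : Fin (g + 1), j ≠ i ∧ j ≠ i - 1 ∧ x = Q i + W j})) : 0 < x := by
  refine lt_of_lt_of_le hC (csInf_le ⟨0, ?_⟩ hx)
  rintro y ((⟨i, j, -, rfl⟩ | ⟨i, j, -, rfl⟩) | ⟨i, j, -, -, rfl⟩)
  · exact add_nonneg (hQ i) (hQ j)
  · exact add_nonneg (hW i) (hW j)
  · exact add_nonneg (hQ i) (hW j)

lemma aux_QQ {Q W : Fin (g + 1) → ℝ} (hQ : ∀ i, 0 ≤ Q i) (hW : ∀ i, 0 ≤ W i)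
    (hC : 0 < Cgm1 g Q W) {i j : Fin (g + 1)} (hij : i ≠ j) : 0 < Q i + Q j := by
  rcases hij.lt_or_gt with h | h
  · exact aux_pos_of_mem hQ hW hC (Or.inl (Or.inl ⟨i, j, h, rfl⟩))
  · rw [add_comm]
    exact aux_pos_of_mem hQ hW hC (Or.inl (Or.inl ⟨j, i, h, rfl⟩))

lemma aux_WW {Q W : Fin (g + 1) → ℝ} (hQ : ∀ i, 0 ≤ Q i) (hW : ∀ i, 0 ≤ W i)
    (hC : 0 < Cgm1 g Q W) {i j : Fin (g + 1)} (hij : i ≠ j) : 0 < W i + W j := by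
  rcases hij.lt_or_gt with h | h
  · exact aux_pos_of_mem hQ hW hC (Or.inl (Or.inr ⟨i, j, h, rfl⟩))
  · rw [add_comm]
    exact aux_pos_of_mem hQ hW hC (Or.inl (Or.inr ⟨j, i, h, rfl⟩))

lemma aux_QW {Q W : Fin (g + 1) → ℝ} (hQ : ∀ i, 0 ≤ Q i) (hW : ∀ i, 0 ≤ W i)
    (hC : 0 < Cgm1 g Q W) {i j : Fin (g + 1)} (h1 : j ≠ i) (h2 : j ≠ i - 1) :
    0 < Q i + W j :=
  aux_pos_of_mem hQ hW hC (Or.inr ⟨i, j, h1, h2, rfl⟩)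

lemma aux_nonneg {QW : (Fin (g + 1) → ℝ) × (Fin (g + 1) → ℝ)} (hS : QW ∈ Sset g) :
    (∀ i, 0 ≤ QW.1 i) ∧ (∀ i, 0 ≤ QW.2 i) := by
  have hmin := hS.1
  constructor
  · intro i
    calc (0 : ℝ) = _ := hmin.symm
    _ ≤ Finset.univ.inf' Finset.univ_nonempty QW.1 := min_le_left _ _
    _ ≤ QW.1 i := Finset.inf'_le _ (Finset.mem_univ i)
  · intro i
    calc (0 : ℝ) = _ := hmin.symm
    _ ≤ Finset.univ.inf' Finset.univ_nonempty QW.2 := min_le_right _ _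
    _ ≤ QW.2 i := Finset.inf'_le _ (Finset.mem_univ i)

end Aux

/-- The sets `T^0, …, T^g` are pairwise disjoint and cover `S`. -/
theorem isolevel_decomposition (g : ℕ) (hg : 1 ≤ g) :
    (∀ i j : Fin (g + 1), i ≠ j → Tset g i ∩ Tset g j = ∅) ∧
    Sset g = ⋃ i : Fin (g + 1), Tset g i := by
  have hone : (1 : Fin (g + 1)) ≠ 0 := by
    simp [Fin.ext_iff, Nat.one_mod_eq_one.mpr]
    omega
  constructor
  · intro i j hij
    rw [Set.eq_empty_iff_forall_notMem]
    rintro QW ⟨⟨hSi, hWi, hi⟩, ⟨hSj, hWj, hj⟩⟩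
    obtain ⟨hQ, hW⟩ := aux_nonneg hSi
    have hC := hSi.2
    rcases hi with hi | hi <;> rcases hj with hj | hj
    · have := aux_QQ hQ hW hC hij
      rw [hi, hj] at this; simp at this
    · by_cases h1 : j - 1 = i
      · rw [← h1] at hWi; exact absurd hj (ne_of_gt hWi)
      · by_cases h2 : j - 1 = i - 1
        · exact hij (sub_left_injective h2).symm
        · have := aux_QW hQ hW hC h1 h2
          rw [hi, hj] at this; simp at this
    · by_cases h1 : i - 1 = j
      · rw [← h1] at hWj; exact absurd hi (ne_of_gt hWj)
      · by_cases h2 : i - 1 = j - 1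
        · exact hij (sub_left_injective h2)
        · have := aux_QW hQ hW hC h1 h2
          rw [hi, hj] at this; simp at this
    · have hne : i - 1 ≠ j - 1 := fun h => hij (sub_left_injective h)
      have := aux_WW hQ hW hC hne
      rw [hi, hj] at this; simp at this
  · ext QW
    simp only [Set.mem_iUnion]
    constructor
    · intro hS
      obtain ⟨hQ, hW⟩ := aux_nonneg hS
      have hC := hS.2
      have hkey : ∀ k : Fin (g + 1), QW.2 k = 0 → ∃ i, QW ∈ Tset g i := by
        intro k hk
        refine ⟨k + 1, hS, ?_, Or.inr (by rw [add_sub_cancel_right, hk])⟩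
        have hne : k ≠ k + 1 := by
          intro h
          exact hone (by simpa using congrArg (· - k) h)
        have := aux_WW hQ hW hC hne
        rwa [hk, zero_add] at this
      have hmin := hS.1
      rcases min_eq_iff.mp hmin with ⟨h0, -⟩ | ⟨h0, -⟩
      · obtain ⟨k, -, hk⟩ := Finset.exists_mem_eq_inf' Finset.univ_nonempty QW.1
        rw [h0] at hk
        by_cases hWk : 0 < QW.2 k
        · exact ⟨k, hS, hWk, Or.inl hk.symm⟩
        · exact hkey k (le_antisymm (not_lt.mp hWk) (hW k))
      · obtain ⟨k, -, hk⟩ := Finset.exists_mem_eq_inf' Finset.univ_nonempty QW.2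
        rw [h0] at hk
        exact hkey k hk.symm
    · rintro ⟨i, hSi, -⟩
      exact hSi
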